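/- arXiv:math/0703160 — 7 statements merged into one kernel-verified Lean document; each statement's English description precedes it below -/
import Mathlib

section
/- The number of lattice paths from (0,0) to (νj, 0) using steps (1,1) and (1,−(ν−1)) that never go strictly below the x-axis equals (1/j)·C(νj, j−1), for integers ν ≥ 2 and j ≥ 1. -/
/-!
Cycle lemma (Dvoretzky–Motzkin). Recording only the heights `1` and `1 - ν` of the steps and
prepending an up-step turns the paths into the words of length `νj + 1` with `j` letters `1 - ν`
(hence of sum `1`) all of whose nonempty prefix sums are positive. An integer word of sum `1` has
exactly one rotation with that property, so these are a `1 / (νj + 1)` fraction of all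
`C(νj + 1, j)` words, and `C(νj + 1, j) / (νj + 1) = C(νj, j - 1) / j`.
-/

open Finset

namespace List

def AllPrefixSumsPos (l : List ℤ) : Prop :=
  ∀ i ≤ l.length, 0 < i → 0 < (l.take i).sum

instance : DecidablePred AllPrefixSumsPos := fun l => by
  unfold AllPrefixSumsPos
  infer_instance

theorem sum_take_rotate (l : List ℤ) {k i : ℕ} (hk : k ≤ l.length) (hi : i ≤ l.length) :
    ((l.rotate k).take i).sum
      = (l.take (k + i)).sum - (l.take k).sum + (l.take (i - (l.length - k))).sum := by
  rw [rotate_eq_drop_append_take hk, take_append, sum_append, length_drop, take_take,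
    min_eq_left (by omega : i - (l.length - k) ≤ k), take_add, sum_append]
  ring

theorem allPrefixSumsPos_rotate_iff {l : List ℤ} (hs : l.sum = 1) {k : ℕ}
    (hk : k < l.length) :
    AllPrefixSumsPos (l.rotate k) ↔ ∀ i ≤ l.length,
      (l.take k).sum ≤ (l.take i).sum ∧ (k < i → (l.take k).sum < (l.take i).sum) := by
  set n := l.length
  have before_wrap : ∀ i, k + i ≤ n →
      ((l.rotate k).take i).sum = (l.take (k + i)).sum - (l.take k).sum := fun i hi => by
    rw [sum_take_rotate l hk.le (by omega), Nat.sub_eq_zero_of_le (by omega)]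
    simp
  have after_wrap : ∀ m ≤ k,
      ((l.rotate k).take (n - k + m)).sum = 1 - (l.take k).sum + (l.take m).sum := fun m hm => by
    rw [sum_take_rotate l hk.le (by omega), take_of_length_le (by omega), hs,
      Nat.add_sub_cancel_left]
  rw [AllPrefixSumsPos, length_rotate]
  constructor
  · intro h i hi
    rcases le_or_gt i k with hik | hki
    · have := h (n - k + i) (by omega) (by omega)
      rw [after_wrap i hik] at this
      exact ⟨by omega, fun h => absurd h (by omega)⟩
    · have := h (i - k) (by omega) (by omega)
      rw [before_wrap _ (by omega), Nat.add_sub_cancel' hki.le] at this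
      constructor <;> omega
  · intro h i hin hi
    rcases le_or_gt i (n - k) with hi' | hi'
    · rw [before_wrap i (by omega)]
      linarith [(h (k + i) (by omega)).2 (by omega)]
    · obtain ⟨m, rfl⟩ : ∃ m, i = n - k + m := ⟨i - (n - k), by omega⟩
      rw [after_wrap m (by omega)]
      linarith [(h m (by omega)).1]

theorem existsUnique_rotate_allPrefixSumsPos {l : List ℤ} (hs : l.sum = 1) :
    ∃! k, k < l.length ∧ AllPrefixSumsPos (l.rotate k) := by
  set n := l.length
  set P : ℕ → ℤ := fun i => (l.take i).sum
  have hP0 : P 0 = 0 := by simp [P]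
  have hPn : P n = 1 := by simp [P, n, hs]
  obtain ⟨m, hm, hmin⟩ := (Finset.range (n + 1)).exists_min_image P ⟨0, by simp⟩
  -- the last position at which `P` attains its minimum
  set k := Nat.findGreatest (fun k => ∀ i ≤ n, P k ≤ P i) n
  have hk : ∀ i ≤ n, P k ≤ P i :=
    Nat.findGreatest_spec (P := fun k => ∀ i ≤ n, P k ≤ P i) (mem_range_succ_iff.1 hm)
      fun i hi => hmin i (mem_range_succ_iff.2 hi)
  have hkn : k < n := by
    refine lt_of_le_of_ne (Nat.findGreatest_le n) fun hkn => ?_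
    have := hk 0 (Nat.zero_le n)
    rw [hkn] at this
    omega
  have hgood : AllPrefixSumsPos (l.rotate k) := (allPrefixSumsPos_rotate_iff hs hkn).2
    fun i hi => ⟨hk i hi, fun hki => lt_of_le_of_ne (hk i hi) fun hPi =>
      Nat.findGreatest_is_greatest hki hi fun j hj => hPi.symm.trans_le (hk j hj)⟩
  refine ⟨k, ⟨hkn, hgood⟩, fun k' ⟨hk', hgood'⟩ => ?_⟩
  have h := (allPrefixSumsPos_rotate_iff hs hkn).1 hgood
  have h' := (allPrefixSumsPos_rotate_iff hs hk').1 hgood'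
  refine le_antisymm (not_lt.1 fun hlt => ?_) (not_lt.1 fun hlt => ?_)
  · exact absurd ((h k' hk'.le).2 hlt) (not_lt.2 (h' k hkn.le).1)
  · exact absurd ((h' k hkn.le).2 hlt) (not_lt.2 (h k' hk'.le).1)

theorem AllPrefixSumsPos.head_pos {x : ℤ} {t : List ℤ} (h : AllPrefixSumsPos (x :: t)) :
    0 < x := by
  simpa using h 1 (by simp) one_pos

theorem allPrefixSumsPos_one_cons_iff {t : List ℤ} :
    AllPrefixSumsPos (1 :: t) ↔ ∀ p, p <+: t → 0 ≤ p.sum := by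
  constructor
  · intro h p hp
    have := h (p.length + 1) (by simpa using hp.length_le) p.length.succ_pos
    rw [take_succ_cons, sum_cons, ← prefix_iff_eq_take.1 hp] at this
    omega
  · rintro h (_ | i) - hi
    · exact absurd hi (lt_irrefl 0)
    · rw [take_succ_cons, sum_cons]
      linarith [h _ (take_prefix i t)]

theorem sum_eq_of_forall_mem_eq_or_eq {R : Type*} [CommRing R] [DecidableEq R] {a b : R}
    (hab : a ≠ b) {l : List R} (h : ∀ x ∈ l, x = a ∨ x = b) :
    l.sum = l.length * a + l.count b * (b - a) := by
  induction l with
  | nil => simp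
  | cons x t ih =>
    rw [forall_mem_cons] at h
    rcases h.1 with rfl | rfl <;> simp [ih h.2, hab] <;> ring

theorem count_ofFn {α : Type*} [DecidableEq α] {n : ℕ} (f : Fin n → α) (a : α) :
    (List.ofFn f).count a = #{i | f i = a} := by
  simpa using (Fin.card_filter_univ_eq_vector_get_eq_count a (Vector.ofFn f)).symm

theorem sum_map_prodMk_one (t : List ℤ) : (t.map (Prod.mk 1)).sum = ((t.length : ℤ), t.sum) := by
  induction t with
  | nil => rfl
  | cons x t ih => simp [ih, add_comm]

end List

theorem Finset.card_filter_mul_eq_card_of_existsUnique_rotate {α : Type*} [DecidableEq α]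
    {S : Finset (List α)} {n : ℕ} {p : List α → Prop} [DecidablePred p]
    (hlen : ∀ l ∈ S, l.length = n) (hrot : ∀ l ∈ S, ∀ k, l.rotate k ∈ S)
    (hp : ∀ l ∈ S, ∃! k, k < n ∧ p (l.rotate k)) :
    #(S.filter p) * n = #S := by
  have rotate_rotate_eq {l : List α} (hl : l ∈ S) {k m : ℕ} (hkm : k + m = n) :
      (l.rotate k).rotate m = l := by
    rw [List.rotate_rotate, hkm, ← hlen l hl, List.rotate_length]
  -- count the pairs `(l, k)` with `p (l.rotate k)` by `l` and by `k`
  have hcount := card_mul_eq_card_mul (fun l k => p (l.rotate k)) (s := S) (t := range n)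
    (m := 1) (n := #(S.filter p)) (fun l hl => ?_) (fun k hk => ?_)
  · rw [card_range, mul_one] at hcount
    rw [hcount, mul_comm]
  · obtain ⟨k, hk, huniq⟩ := hp l hl
    refine card_eq_one.2 ⟨k, eq_singleton_iff_unique_mem.2 ⟨?_, fun i hi => ?_⟩⟩
    · simpa [bipartiteAbove] using hk
    · simp only [bipartiteAbove, mem_filter, mem_range] at hi
      exact huniq i hi
  · have hk : k < n := mem_range.1 hk
    refine card_nbij' (·.rotate k) (·.rotate (n - k)) (fun l hl => ?_) (fun l hl => ?_)
      (fun l hl => ?_) (fun l hl => ?_)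
    · simp only [bipartiteBelow, coe_filter, Set.mem_ofPred_eq] at hl ⊢
      exact ⟨hrot l hl.1 k, hl.2⟩
    · simp only [bipartiteBelow, coe_filter, Set.mem_ofPred_eq] at hl ⊢
      exact ⟨hrot l hl.1 _, by rw [rotate_rotate_eq hl.1 (by omega)]; exact hl.2⟩
    · simp only [bipartiteBelow, coe_filter, Set.mem_ofPred_eq] at hl
      exact rotate_rotate_eq hl.1 (by omega)
    · simp only [coe_filter, Set.mem_ofPred_eq] at hl
      exact rotate_rotate_eq hl.1 (by omega)

section TwoLetterWords

variable {α : Type*} [DecidableEq α] {a b : α}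

def twoLetterWords (a b : α) (n j : ℕ) : Finset (List α) :=
  (powersetCard j (univ : Finset (Fin n))).image
    fun s => List.ofFn fun i => if i ∈ s then b else a

theorem mem_twoLetterWords (hab : a ≠ b) {n j : ℕ} {l : List α} :
    l ∈ twoLetterWords a b n j ↔
      l.length = n ∧ (∀ x ∈ l, x = a ∨ x = b) ∧ l.count b = j := by
  simp only [twoLetterWords, mem_image, mem_powersetCard_univ]
  constructor
  · rintro ⟨s, rfl, rfl⟩
    refine ⟨List.length_ofFn, fun x hx => ?_, ?_⟩
    · obtain ⟨i, rfl⟩ := List.mem_ofFn.1 hx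
      split_ifs <;> simp
    · rw [List.count_ofFn]
      congr 1
      ext i
      by_cases hi : i ∈ s <;> simp [hi, hab]
  · rintro ⟨rfl, hmem, rfl⟩
    refine ⟨({i | l.get i = b} : Finset _), by rw [← List.count_ofFn, List.ofFn_get], ?_⟩
    conv_rhs => rw [← List.ofFn_get l]
    congr 1
    ext i
    rcases hmem _ (l.getElem_mem i.isLt) with h | h <;> simp [h, hab]

theorem rotate_mem_twoLetterWords (hab : a ≠ b) {n j : ℕ} {l : List α}
    (hl : l ∈ twoLetterWords a b n j) (k : ℕ) : l.rotate k ∈ twoLetterWords a b n j := by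
  rw [mem_twoLetterWords hab] at hl ⊢
  obtain ⟨hlen, hmem, hcount⟩ := hl
  exact ⟨by rw [List.length_rotate, hlen], fun x hx => hmem x (List.mem_rotate.1 hx),
    by rw [(l.rotate_perm k).count_eq, hcount]⟩

theorem card_twoLetterWords (hab : a ≠ b) (n j : ℕ) :
    #(twoLetterWords a b n j) = n.choose j := by
  rw [twoLetterWords, card_image_of_injective, card_powersetCard, card_univ, Fintype.card_fin]
  intro s t hst
  ext i
  have := congrFun (List.ofFn_injective hst) i
  split_ifs at this <;> simp_all

end TwoLetterWords

namespace HigherDyck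

def paths (ν j : ℕ) : Set (List (ℤ × ℤ)) :=
  {l | (∀ s ∈ l, s = (1, 1) ∨ s = (1, -((ν : ℤ) - 1))) ∧
    (∀ p : List (ℤ × ℤ), p <+: l → 0 ≤ p.sum.2) ∧ l.sum = (((ν * j : ℕ) : ℤ), (0 : ℤ))}

def heights (ν j : ℕ) : Set (List ℤ) :=
  {t | (∀ x ∈ t, x = 1 ∨ x = -((ν : ℤ) - 1)) ∧ (∀ p, p <+: t → 0 ≤ p.sum) ∧
    t.length = ν * j ∧ t.sum = 0}

theorem paths_subset_range (ν j : ℕ) :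
    paths ν j ⊆ Set.range (List.map (Prod.mk 1)) := by
  rintro l ⟨hsteps, -⟩
  refine ⟨l.map Prod.snd, ?_⟩
  rw [List.map_map]
  refine (List.map_congr_left fun s hs => ?_).trans l.map_id
  rcases hsteps s hs with rfl | rfl <;> rfl

theorem preimage_paths (ν j : ℕ) :
    List.map (Prod.mk 1) ⁻¹' paths ν j = heights ν j := by
  ext t
  simp only [paths, heights, Set.mem_preimage, Set.mem_ofPred_eq, List.forall_mem_map,
    List.prefix_map_iff, forall_comm (α := List (ℤ × ℤ)), forall_exists_index, and_imp, forall_eq,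
    List.sum_map_prodMk_one, Prod.mk.injEq, Nat.cast_inj, true_and]

theorem ncard_paths (ν j : ℕ) :
    (paths ν j).ncard = (heights ν j).ncard := by
  rw [← preimage_paths, Set.ncard_preimage_of_injective_subset_range
    (List.map_injective_iff.2 (Prod.mk_right_injective 1)) (paths_subset_range ν j)]

theorem sum_eq_zero_iff_count_eq {ν j : ℕ} (hν : ν ≠ 0) {t : List ℤ}
    (hmem : ∀ x ∈ t, x = 1 ∨ x = -((ν : ℤ) - 1)) (hlen : t.length = ν * j) :
    t.sum = 0 ↔ t.count (-((ν : ℤ) - 1)) = j := by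
  have hd : (1 : ℤ) ≠ -((ν : ℤ) - 1) := by omega
  rw [List.sum_eq_of_forall_mem_eq_or_eq hd hmem, hlen, Nat.cast_mul,
    show ∀ c : ℤ, (ν : ℤ) * j * 1 + c * (-((ν : ℤ) - 1) - 1) = ν * (j - c) from fun c => by ring,
    mul_eq_zero, sub_eq_zero]
  simp [hν, eq_comm]

theorem heights_eq_preimage_cons {ν : ℕ} (hν : ν ≠ 0) (j : ℕ) :
    heights ν j = List.cons 1 ⁻¹'
      ↑((twoLetterWords 1 (-((ν : ℤ) - 1)) (ν * j + 1) j).filter List.AllPrefixSumsPos) := by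
  have hd : (1 : ℤ) ≠ -((ν : ℤ) - 1) := by omega
  ext t
  simp only [heights, Set.mem_preimage, coe_filter, Set.mem_ofPred_eq,
    mem_twoLetterWords hd, List.allPrefixSumsPos_one_cons_iff, List.length_cons,
    List.forall_mem_cons, List.count_cons_of_ne hd, add_left_inj, true_or, true_and]
  constructor
  · rintro ⟨hmem, hpre, hlen, hsum⟩
    exact ⟨⟨hlen, hmem, (sum_eq_zero_iff_count_eq hν hmem hlen).1 hsum⟩, hpre⟩
  · rintro ⟨⟨hlen, hmem, hcount⟩, hpre⟩
    exact ⟨hmem, hpre, hlen, (sum_eq_zero_iff_count_eq hν hmem hlen).2 hcount⟩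

theorem filter_allPrefixSumsPos_subset_range {ν : ℕ} (hν : ν ≠ 0) (j : ℕ) :
    ↑((twoLetterWords 1 (-((ν : ℤ) - 1)) (ν * j + 1) j).filter List.AllPrefixSumsPos) ⊆
      Set.range (List.cons (1 : ℤ)) := by
  have hd : (1 : ℤ) ≠ -((ν : ℤ) - 1) := by omega
  intro l hl
  simp only [coe_filter, Set.mem_ofPred_eq, mem_twoLetterWords hd] at hl
  obtain ⟨⟨hlen, hmem, -⟩, hpos⟩ := hl
  obtain ⟨x, t, rfl⟩ := List.exists_cons_of_length_eq_add_one hlen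
  have hx : x = 1 := by
    have := hpos.head_pos
    rcases hmem x List.mem_cons_self with h | h <;> omega
  exact ⟨t, by rw [hx]⟩

theorem ncard_heights {ν : ℕ} (hν : ν ≠ 0) (j : ℕ) :
    (heights ν j).ncard =
      #((twoLetterWords 1 (-((ν : ℤ) - 1)) (ν * j + 1) j).filter List.AllPrefixSumsPos) := by
  rw [heights_eq_preimage_cons hν, Set.ncard_preimage_of_injective_subset_range
    List.cons_injective (filter_allPrefixSumsPos_subset_range hν j), Set.ncard_coe_finset]

end HigherDyck

open HigherDyck in
/-- The number of lattice paths from (0,0) to (νj, 0) using steps (1,1) and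
(1, −(ν−1)) that never go strictly below the x-axis equals (1/j)·C(νj, j−1). -/
theorem higher_dyck_path_count (ν j : ℕ) (hν : 2 ≤ ν) (hj : 1 ≤ j) :
    ({l : List (ℤ × ℤ) |
        (∀ s ∈ l, s = (1, 1) ∨ s = (1, -((ν : ℤ) - 1))) ∧
        (∀ p : List (ℤ × ℤ), p <+: l → 0 ≤ p.sum.2) ∧
        l.sum = (((ν * j : ℕ) : ℤ), (0 : ℤ))}.ncard : ℚ) =
      (1 / j : ℚ) * ((ν * j).choose (j - 1)) := by
  change ((paths ν j).ncard : ℚ) = _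
  rw [ncard_paths, ncard_heights (by omega)]
  set d : ℤ := -((ν : ℤ) - 1)
  have hd : (1 : ℤ) ≠ d := by omega
  set S := twoLetterWords 1 d (ν * j + 1) j
  have hsum : ∀ l ∈ S, l.sum = 1 := fun l hl => by
    obtain ⟨hlen, hmem, hcount⟩ := (mem_twoLetterWords hd).1 hl
    rw [List.sum_eq_of_forall_mem_eq_or_eq hd hmem, hlen, hcount]
    push_cast
    ring
  have hcycle : #(S.filter List.AllPrefixSumsPos) * (ν * j + 1) = (ν * j + 1).choose j := by
    rw [card_filter_mul_eq_card_of_existsUnique_rotate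
      (fun l hl => ((mem_twoLetterWords hd).1 hl).1) (fun l hl => rotate_mem_twoLetterWords hd hl)
      fun l hl => by simpa only [((mem_twoLetterWords hd).1 hl).1] using
        List.existsUnique_rotate_allPrefixSumsPos (hsum l hl), card_twoLetterWords hd]
  have hpascal := Nat.add_one_mul_choose_eq (ν * j) (j - 1)
  rw [Nat.sub_add_cancel hj, ← hcycle] at hpascal
  have hcount : #(S.filter List.AllPrefixSumsPos) * j = (ν * j).choose (j - 1) :=
    Nat.eq_of_mul_eq_mul_left (ν * j).succ_pos (by linarith)
  rw [← hcount]
  push_cast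
  field_simp
end

section
/- For integers ν ≥ 2 and j ≥ i ≥ 1, the sum over all i-tuples (j_1,...,j_i) of positive integers with j_1+...+j_i = j of the products ζ_{j_1}^{(ν)} ζ_{j_2}^{(ν)} ··· ζ_{j_i}^{(ν)} equals (i/j)·C(νj, j−i), where ζ_m^{(ν)} = (1/m)·C(νm, m−1). -/
/-!
The Raney numbers `R_q(p, n) = p / (p + n q) * C(p + n q, n)` are the coefficients of `B(x) ^ p`,
where `B = 1 + x B ^ q` is the generating function of the Fuss–Catalan numbers. Hence
`R_q(p + r, ·)` is the convolution of `R_q(p, ·)` and `R_q(r, ·)`; we prove this directly from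
the Pascal-type recurrence `R_q(p + 1, n + 1) = R_q(p, n + 1) + R_q(p + q, n)`.
Since `ζ_{m+1} = R_ν(ν, m)`, lowering every part of a composition of `j` into `i` positive parts
by one turns the sum into the `i`-fold convolution of `R_ν(ν, ·)` at `j - i`, which is
`R_ν(iν, j - i) = (i / j) C(νj, j - i)`.
-/

open Finset

namespace Finset.Nat

theorem sum_antidiagonalTuple_succ {M : Type*} [AddCommMonoid M] (k n : ℕ)
    (g : (Fin (k + 1) → ℕ) → M) :
    ∑ f ∈ Nat.antidiagonalTuple (k + 1) n, g f =
      ∑ p ∈ antidiagonal n, ∑ f ∈ Nat.antidiagonalTuple k p.2, g (Fin.cons p.1 f) := by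
  have : (Nat.antidiagonalTuple (k + 1) n).val =
      (antidiagonal n).val.bind fun p => (Nat.antidiagonalTuple k p.2).val.map (Fin.cons p.1) := by
    simp only [Nat.antidiagonalTuple, Multiset.Nat.antidiagonalTuple, List.Nat.antidiagonalTuple]
    rw [← Multiset.coe_bind]
    rfl
  simp only [Finset.sum, this, Multiset.map_bind, Multiset.sum_bind, Multiset.map_map]
  rfl

theorem sum_filter_pos_antidiagonalTuple {M : Type*} [AddCommMonoid M] (k n : ℕ)
    (g : (Fin k → ℕ) → M) :
    ∑ f ∈ (Nat.antidiagonalTuple k (n + k)).filter (fun f => ∀ i, 0 < f i), g f =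
      ∑ f ∈ Nat.antidiagonalTuple k n, g (f + 1) := by
  have sub_one_add_one {f : Fin k → ℕ} (hf : ∀ i, 0 < f i) : f - 1 + 1 = f :=
    funext fun i => Nat.sub_add_cancel (hf i)
  refine sum_nbij' (· - 1) (· + 1) (fun f hf => ?_) (fun f hf => ?_) (fun f hf => ?_)
    (fun f _ => add_tsub_cancel_right f 1) (fun f hf => ?_)
  · obtain ⟨hsum, hpos⟩ := mem_filter.1 hf
    rw [Nat.mem_antidiagonalTuple] at hsum ⊢
    have h := congrArg (fun f : Fin k → ℕ => ∑ i, f i) (sub_one_add_one hpos)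
    simp only [Pi.add_apply, Pi.one_apply, sum_add_distrib, sum_const, card_univ,
      Fintype.card_fin, smul_eq_mul, mul_one] at h
    omega
  · refine mem_filter.2 ⟨?_, fun i => Nat.succ_pos _⟩
    simp [Nat.mem_antidiagonalTuple, sum_add_distrib, Nat.mem_antidiagonalTuple.1 hf]
  · exact sub_one_add_one (mem_filter.1 hf).2
  · rw [sub_one_add_one (mem_filter.1 hf).2]

end Finset.Nat

def raney (q p n : ℕ) : ℚ :=
  if n = 0 then 1 else p / (p + n * q) * (p + n * q).choose n

@[simp]
lemma raney_zero_right (q p : ℕ) : raney q p 0 = 1 := if_pos rfl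

@[simp]
lemma raney_zero_succ (q n : ℕ) : raney q 0 (n + 1) = 0 := by simp [raney]

lemma raney_one (q p : ℕ) : raney q p 1 = p := by
  simp only [raney, one_ne_zero, if_false, Nat.choose_one_right]
  push_cast [one_mul]
  refine div_mul_cancel_of_imp fun h => ?_
  norm_cast at h ⊢
  omega

lemma raney_succ_succ (q p n : ℕ) :
    raney q (p + 1) (n + 1) = raney q p (n + 1) + raney q (p + q) n := by
  rcases Nat.eq_zero_or_pos n with rfl | hn
  · simp [raney_one]
  set N := p + (n + 1) * q with hN
  rcases Nat.eq_zero_or_pos N with hN0 | hNpos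
  · obtain ⟨rfl, rfl⟩ : p = 0 ∧ q = 0 := by constructor <;> nlinarith
    simp [raney, hn.ne', Nat.choose_eq_zero_of_lt (by omega : 1 < n + 1)]
  have pascal : ((N + 1).choose (n + 1) : ℚ) = N.choose n + N.choose (n + 1) := by
    exact_mod_cast Nat.choose_succ_succ' N n
  have absorb : ((N : ℚ) + 1) * N.choose n = (N + 1).choose (n + 1) * (n + 1) := by
    exact_mod_cast Nat.add_one_mul_choose_eq N n
  have hN_cast : (N : ℚ) = p + (n + 1) * q := by rw [hN]; push_cast; ring
  have hN_ne : (N : ℚ) ≠ 0 := Nat.cast_ne_zero.2 hNpos.ne'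
  have hN_succ : p + 1 + (n + 1) * q = N + 1 := by omega
  have hN_shift : p + q + n * q = N := by rw [hN]; ring
  simp only [raney, Nat.add_one_ne_zero, hn.ne', if_false, hN_succ, hN_shift]
  push_cast
  rw [show (p : ℚ) + 1 + (n + 1) * q = N + 1 by rw [hN_cast]; ring, ← hN_cast,
    show (p : ℚ) + q + n * q = N by rw [hN_cast]; ring]
  -- by `pascal` and `absorb`, both sides equal `(p + 1) / (n + 1) * C(N, n)`
  field_simp
  linear_combination (N + 1) * p * pascal - q * absorb + ((N + 1).choose (n + 1) : ℚ) * hN_cast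

lemma raney_add (q p r n : ℕ) :
    raney q (p + r) n = ∑ x ∈ antidiagonal n, raney q p x.1 * raney q r x.2 := by
  induction n generalizing p with
  | zero => simp
  | succ n ihn =>
    induction p with
    | zero => simp [Nat.sum_antidiagonal_succ]
    | succ p ihp =>
      rw [Nat.sum_antidiagonal_succ, raney_zero_right]
      simp only [raney_succ_succ, add_mul, sum_add_distrib, ← ihn]
      rw [add_right_comm p 1 r, raney_succ_succ, ihp, Nat.sum_antidiagonal_succ, raney_zero_right,
        add_right_comm p q r]
      ring

lemma raney_mul (q p k n : ℕ) :
    raney q (k * p) n = ∑ f ∈ Nat.antidiagonalTuple k n, ∏ i, raney q p (f i) := by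
  induction k generalizing n with
  | zero => cases n <;> simp
  | succ k ih =>
    simp only [Nat.sum_antidiagonalTuple_succ, Fin.prod_univ_succ, Fin.cons_zero, Fin.cons_succ,
      ← mul_sum, ← ih, add_mul, one_mul, add_comm _ p, raney_add]

lemma raney_mul_self (q i n : ℕ) (hi : 0 < i) :
    raney q (i * q) n = i / (i + n) * (q * (i + n)).choose n := by
  rcases Nat.eq_zero_or_pos n with rfl | hn
  · simp [hi.ne']
  rcases Nat.eq_zero_or_pos q with rfl | hq
  · simp [raney, hn.ne', Nat.choose_eq_zero_of_lt hn]
  simp only [raney, hn.ne', if_false]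
  rw [show i * q + n * q = q * (i + n) by ring]
  push_cast
  rw [← add_mul, mul_div_mul_right _ _ (by positivity)]

theorem eta_formula_general (ν j i : ℕ) (hi : 1 ≤ i) (hij : i ≤ j)
    (ζ : ℕ → ℚ) (hζ : ∀ m : ℕ, 1 ≤ m → ζ m = (1 / m) * ((ν * m).choose (m - 1))) :
    ∑ f ∈ (Finset.Nat.antidiagonalTuple i j).filter (fun f => ∀ k, 0 < f k),
        ∏ k, ζ (f k) =
      ((i : ℚ) / j) * ((ν * j).choose (j - i)) := by
  obtain ⟨n, rfl⟩ := Nat.exists_eq_add_of_le' hij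
  have hζ_raney (m : ℕ) : ζ (m + 1) = raney ν ν m := by
    have := raney_mul_self ν 1 m one_pos
    rw [one_mul] at this
    rw [hζ (m + 1) m.succ_pos, this]
    simp [add_comm]
  simp only [Nat.sum_filter_pos_antidiagonalTuple, Pi.add_apply, Pi.one_apply, hζ_raney,
    ← raney_mul, raney_mul_self ν i n hi, Nat.add_sub_cancel]
  push_cast
  rw [add_comm (n : ℚ), add_comm n]

/-- For ν ≥ 2 and j ≥ i ≥ 1, the sum over i-tuples of positive integers
summing to j of products of higher Catalan numbers equals (i/j)·C(νj, j−i). -/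
theorem eta_formula (ν j i : ℕ) (hν : 2 ≤ ν) (hi : 1 ≤ i) (hij : i ≤ j)
    (ζ : ℕ → ℚ) (hζ : ∀ m : ℕ, 1 ≤ m → ζ m = (1 / m) * ((ν * m).choose (m - 1))) :
    ∑ f ∈ (Finset.Nat.antidiagonalTuple i j).filter (fun f => ∀ k, 0 < f k),
        ∏ k, ζ (f k) =
      ((i : ℚ) / j) * ((ν * j).choose (j - i)) :=
  eta_formula_general ν j i hi hij ζ hζ
end

section
/- For integers ν ≥ 2 and j ≥ 1: j! · (−(r_ν−1)·μ_ν·ζ_j + μ_ν·η_j + (1/2)·l_j) = (νj−1)!/((ν−1)j+2)!, where μ_ν = (ν−1)²/(4ν(ν+1)), r_ν = 3(ν+1)/(ν−1), ζ_j = (1/j)·C(νj, j−1), η_j = (2/j)·C(νj, j−2), and l_j = (1/j)·C(νj−1, j−1). -/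
/-!
With `L = C(νj−1, j−1)`, `a = (ν−1)j+1` and `b = a+1`, Pascal-type recurrences give
`ζ_j = νL/a`, `η_j = 2ν(j−1)L/(ab)` (which also covers `η_1 = 0`), `l_j = L/j`, and
`(νj−1)!/((ν−1)j+2)! = (j−1)! L/(ab)`. Dividing out `(j−1)! L` leaves an identity between
rational functions of `ν` and `j`.
-/

namespace GenusZero

variable {ν j : ℕ}

lemma cast_choose_mul_sub_one (hν : 1 ≤ ν) (hj : 1 ≤ j) :
    ((ν * j).choose (j - 1) : ℚ) =
      ν * j * ((ν * j - 1).choose (j - 1)) / (((ν : ℚ) - 1) * j + 1) := by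
  have key := Nat.choose_mul_succ_eq (ν * j - 1) (j - 1)
  have hsub : ν * j - 1 + 1 - (j - 1) = (ν - 1) * j + 1 := by
    have := Nat.sub_one_mul ν j
    have : j ≤ ν * j := Nat.le_mul_of_pos_left j hν
    omega
  rw [hsub, Nat.sub_add_cancel (Nat.one_le_iff_ne_zero.2 (by positivity))] at key
  have hνq : (1 : ℚ) ≤ ν := by exact_mod_cast hν
  rw [eq_div_iff (by positivity)]
  have := congrArg (Nat.cast : ℕ → ℚ) key
  push_cast [Nat.cast_sub hν] at this
  linear_combination -this

lemma cast_choose_mul_sub_two (hν : 1 ≤ ν) (hj : 2 ≤ j) :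
    ((ν * j).choose (j - 2) : ℚ) =
      (j - 1) * ((ν * j).choose (j - 1)) / (((ν : ℚ) - 1) * j + 2) := by
  have key := Nat.choose_succ_right_eq (ν * j) (j - 2)
  have hsub : ν * j - (j - 2) = (ν - 1) * j + 2 := by
    have := Nat.sub_one_mul ν j
    have : j ≤ ν * j := Nat.le_mul_of_pos_left j hν
    omega
  rw [hsub, show j - 2 + 1 = j - 1 by omega] at key
  have hνq : (1 : ℚ) ≤ ν := by exact_mod_cast hν
  rw [eq_div_iff (by positivity)]
  have := congrArg (Nat.cast : ℕ → ℚ) key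
  push_cast [Nat.cast_sub hν, Nat.cast_sub (by omega : 1 ≤ j)] at this
  linear_combination -this

lemma cast_factorial_div_factorial (hν : 1 ≤ ν) (hj : 1 ≤ j) :
    ((ν * j - 1).factorial : ℚ) / ((ν - 1) * j + 2).factorial =
      (j - 1).factorial * ((ν * j - 1).choose (j - 1)) /
        ((((ν : ℚ) - 1) * j + 1) * (((ν : ℚ) - 1) * j + 2)) := by
  have hjν : j ≤ ν * j := Nat.le_mul_of_pos_left j hν
  have hsub : ν * j - 1 - (j - 1) = (ν - 1) * j := by
    have := Nat.sub_one_mul ν j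
    omega
  have key := Nat.choose_mul_factorial_mul_factorial (by omega : j - 1 ≤ ν * j - 1)
  rw [hsub] at key
  rw [← key, Nat.factorial_succ, Nat.factorial_succ]
  have hνq : (1 : ℚ) ≤ ν := by exact_mod_cast hν
  have : (0 : ℚ) < ((ν : ℚ) - 1) * j + 1 := by positivity
  have : (0 : ℚ) < ((ν : ℚ) - 1) * j + 2 := by positivity
  push_cast [Nat.cast_sub hν]
  field_simp
  ring

lemma rational_identity {ν j μ r : ℚ} (hν0 : ν ≠ 0) (hν1 : ν - 1 ≠ 0) (hν2 : ν + 1 ≠ 0)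
    (hj : j ≠ 0) (ha : (ν - 1) * j + 1 ≠ 0) (hb : (ν - 1) * j + 2 ≠ 0)
    (hμ : μ = (ν - 1) ^ 2 / (4 * ν * (ν + 1))) (hr : r = 3 * (ν + 1) / (ν - 1)) :
    j * (-(r - 1) * μ * (ν / ((ν - 1) * j + 1))
      + μ * (2 * ν * (j - 1) / (((ν - 1) * j + 1) * ((ν - 1) * j + 2))) + 1 / 2 * (1 / j)) =
      1 / (((ν - 1) * j + 1) * ((ν - 1) * j + 2)) := by
  subst hμ hr
  -- `field_simp` does not recognise these denominators in expanded form, so name them.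
  generalize hA : (ν - 1) * j + 1 = a at *
  generalize hB : (ν - 1) * j + 2 = b at *
  field_simp
  rw [← hA, ← hB]
  ring

end GenusZero

open GenusZero in
/-- The rational identity yielding the genus 0 map count:
j!·(−(r_ν−1)μ_ν ζ_j + μ_ν η_j + (1/2) l_j) = (νj−1)!/((ν−1)j+2)!. -/
theorem genus_zero_count_identity (ν j : ℕ) (hν : 2 ≤ ν) (hj : 1 ≤ j)
    (μ r ζ η l : ℚ)
    (hμ : μ = ((ν : ℚ) - 1) ^ 2 / (4 * ν * (ν + 1)))
    (hr : r = 3 * ((ν : ℚ) + 1) / ((ν : ℚ) - 1))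
    (hζ : ζ = (1 / j : ℚ) * ((ν * j).choose (j - 1)))
    (hη : (j = 1 → η = 0) ∧ (2 ≤ j → η = (2 / j : ℚ) * ((ν * j).choose (j - 2))))
    (hl : l = (1 / j : ℚ) * ((ν * j - 1).choose (j - 1))) :
    (j.factorial : ℚ) * (-(r - 1) * μ * ζ + μ * η + (1 / 2) * l) =
      ((ν * j - 1).factorial : ℚ) / (((ν - 1) * j + 2).factorial) := by
  have hν1 : 1 ≤ ν := by omega
  have hνq : (2 : ℚ) ≤ ν := by exact_mod_cast hν
  have hj0 : (j : ℚ) ≠ 0 := by positivity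
  have ha : ((ν : ℚ) - 1) * j + 1 ≠ 0 := by nlinarith
  have hb : ((ν : ℚ) - 1) * j + 2 ≠ 0 := by nlinarith
  have hζ' : ζ = ν / (((ν : ℚ) - 1) * j + 1) * ((ν * j - 1).choose (j - 1) : ℚ) := by
    rw [hζ, cast_choose_mul_sub_one hν1 hj]
    field_simp
  have hη' : η = 2 * ν * (j - 1) / ((((ν : ℚ) - 1) * j + 1) * (((ν : ℚ) - 1) * j + 2)) *
      ((ν * j - 1).choose (j - 1) : ℚ) := by
    rcases hj.eq_or_lt with rfl | hj2
    · simp [hη.1 rfl]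
    · rw [hη.2 hj2, cast_choose_mul_sub_two hν1 hj2, cast_choose_mul_sub_one hν1 hj]
      field_simp
  have key := rational_identity (by positivity) (by linarith) (by positivity) hj0 ha hb hμ hr
  rw [cast_factorial_div_factorial hν1 hj, ← Nat.mul_factorial_pred (by omega : j ≠ 0),
    hζ', hη', hl]
  push_cast
  linear_combination ((j - 1).factorial * ((ν * j - 1).choose (j - 1)) : ℚ) * key
end

section
/- Let z be the formal power series with constant term 1 satisfying s·z^ν = z − 1 (ν ≥ 2), and let α ≥ 0 be an integer. Then the coefficient of s^j in z^{α+1}/(ν − (ν−1)z) equals C(α+νj, j) for all j ≥ 0. -/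
/-!
With `A = ν - (ν - 1) z` and `G m = z ^ (m + 1) / A`, differentiating `X z^ν = z - 1` gives
`z' A = z ^ (ν + 1)`, hence `(z ^ (m + 1))' = (m + 1) G (m + ν)`. On the other hand
`z ^ (m + 1) = A G m = G m - (ν - 1) X G (m + ν)`, because `X G (m + ν) = G (m + 1) - G m`.
Comparing coefficients of both expressions for `(z ^ (m + 1))'` yields
`(k + 1) [X^(k+1)] G m = (m + ν (k + 1) - k) [X^k] G (m + ν)`, which is the recurrence
`(k + 1) C(n, k + 1) = (n - k) C(n, k)` for `n = m + ν (k + 1)`; induct on `k`.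
-/

open PowerSeries

theorem Nat.add_one_mul_choose_succ_add_mul_choose (n k : ℕ) :
    (k + 1) * n.choose (k + 1) + k * n.choose k = n * n.choose k := by
  have h := Nat.add_one_mul_choose_eq n k
  rw [Nat.choose_succ_succ] at h
  linarith

namespace PowerSeries

section CommRing

variable {R : Type*} [CommRing R]

theorem mul_derivative_pow (z : R⟦X⟧) (n : ℕ) :
    z * d⁄dX R (z ^ n) = n * z ^ n * d⁄dX R z := by
  cases n with
  | zero => simp
  | succ n =>
    rw [Derivation.leibniz_pow, nsmul_eq_mul, smul_eq_mul, Nat.add_sub_cancel, pow_succ]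
    ring

noncomputable def gouldDenom (ν : ℕ) (z : R⟦X⟧) : R⟦X⟧ := C (ν : R) - C ((ν : R) - 1) * z

variable {ν : ℕ} {z : R⟦X⟧}

theorem constantCoeff_eq_one_of_X_mul_pow_eq (heq : X * z ^ ν = z - 1) :
    constantCoeff z = 1 := by
  have h := congrArg constantCoeff heq
  rw [map_mul, constantCoeff_X, zero_mul, map_sub, map_one] at h
  exact sub_eq_zero.mp h.symm

theorem constantCoeff_gouldDenom (heq : X * z ^ ν = z - 1) :
    constantCoeff (gouldDenom ν z) = 1 := by
  simp [gouldDenom, constantCoeff_eq_one_of_X_mul_pow_eq heq]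

theorem derivative_mul_gouldDenom (heq : X * z ^ ν = z - 1) :
    d⁄dX R z * gouldDenom ν z = z ^ (ν + 1) := by
  have hd := congrArg (d⁄dX R) heq
  rw [Derivation.leibniz, derivative_X, map_sub, Derivation.map_one_eq_zero, smul_eq_mul,
    smul_eq_mul, mul_one, sub_zero] at hd
  rw [gouldDenom, map_sub, map_natCast, map_one]
  linear_combination -z * hd + X * mul_derivative_pow z ν + ν * d⁄dX R z * heq

end CommRing

section Field

variable {K : Type*} [Field K]

noncomputable def gouldSeries (ν : ℕ) (z : K⟦X⟧) (m : ℕ) : K⟦X⟧ :=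
  z ^ (m + 1) * (gouldDenom ν z)⁻¹

variable {ν : ℕ} {z : K⟦X⟧}

theorem gouldDenom_mul_inv (heq : X * z ^ ν = z - 1) :
    gouldDenom ν z * (gouldDenom ν z)⁻¹ = 1 :=
  PowerSeries.mul_inv_cancel _ (by simp [constantCoeff_gouldDenom heq])

theorem gouldDenom_mul_gouldSeries (heq : X * z ^ ν = z - 1) (m : ℕ) :
    gouldDenom ν z * gouldSeries ν z m = z ^ (m + 1) := by
  rw [gouldSeries, mul_left_comm, gouldDenom_mul_inv heq, mul_one]

theorem constantCoeff_gouldSeries (heq : X * z ^ ν = z - 1) (m : ℕ) :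
    constantCoeff (gouldSeries ν z m) = 1 := by
  simp [gouldSeries, constantCoeff_eq_one_of_X_mul_pow_eq heq, constantCoeff_gouldDenom heq]

theorem X_mul_gouldSeries_add (heq : X * z ^ ν = z - 1) (m : ℕ) :
    X * gouldSeries ν z (m + ν) = gouldSeries ν z (m + 1) - gouldSeries ν z m := by
  simp only [gouldSeries]
  rw [show m + ν + 1 = m + 1 + ν by omega, pow_add]
  linear_combination z ^ (m + 1) * (gouldDenom ν z)⁻¹ * heq

theorem pow_succ_eq_gouldSeries_sub (heq : X * z ^ ν = z - 1) (m : ℕ) :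
    z ^ (m + 1) = gouldSeries ν z m - C ((ν : K) - 1) * (X * gouldSeries ν z (m + ν)) := by
  have hz : z * gouldSeries ν z m = gouldSeries ν z (m + 1) := by
    rw [gouldSeries, gouldSeries, pow_succ z (m + 1)]; ring
  rw [← gouldDenom_mul_gouldSeries heq m, X_mul_gouldSeries_add heq, ← hz, gouldDenom,
    map_sub, map_natCast, map_one]
  ring

theorem derivative_pow_succ_eq (heq : X * z ^ ν = z - 1) (m : ℕ) :
    d⁄dX K (z ^ (m + 1)) = (m + 1) • gouldSeries ν z (m + ν) := by
  have hz' : d⁄dX K z = gouldSeries ν z ν := by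
    rw [gouldSeries, ← derivative_mul_gouldDenom heq, mul_assoc, gouldDenom_mul_inv heq, mul_one]
  rw [Derivation.leibniz_pow, hz', gouldSeries, gouldSeries, nsmul_eq_mul, smul_eq_mul,
    Nat.add_sub_cancel, show m + ν + 1 = m + (ν + 1) by omega, pow_add, nsmul_eq_mul]
  ring

theorem coeff_gouldSeries_succ (heq : X * z ^ ν = z - 1) (m k : ℕ) :
    ((k : K) + 1) * coeff (k + 1) (gouldSeries ν z m)
        + k * coeff k (gouldSeries ν z (m + ν)) =
      ((m + ν * (k + 1) : ℕ) : K) * coeff k (gouldSeries ν z (m + ν)) := by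
  have hcoeff := congrArg (coeff (k + 1)) (pow_succ_eq_gouldSeries_sub heq m)
  rw [map_sub, coeff_C_mul, coeff_succ_X_mul] at hcoeff
  have hderiv := congrArg (coeff k) (derivative_pow_succ_eq heq m)
  rw [coeff_derivative, map_nsmul, nsmul_eq_mul, Nat.cast_succ] at hderiv
  push_cast
  linear_combination (-(k : K) - 1) * hcoeff + hderiv

theorem coeff_gouldSeries [CharZero K] (heq : X * z ^ ν = z - 1) (m j : ℕ) :
    coeff j (gouldSeries ν z m) = ((m + ν * j).choose j : K) := by
  induction j generalizing m with
  | zero => simpa using constantCoeff_gouldSeries heq m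
  | succ j ih =>
    have hrec := coeff_gouldSeries_succ heq m j
    rw [ih, show m + ν + ν * j = m + ν * (j + 1) by ring] at hrec
    have hbinom := congrArg (Nat.cast : ℕ → K)
      (Nat.add_one_mul_choose_succ_add_mul_choose (m + ν * (j + 1)) j)
    push_cast at hbinom hrec
    apply mul_left_cancel₀ (Nat.cast_add_one_ne_zero j)
    linear_combination hrec - hbinom

end Field

end PowerSeries

theorem polya_szego_gould_second_general (ν : ℕ) (z : PowerSeries ℚ)
    (heq : X * z ^ ν = z - 1) (α : ℕ) :
    ∀ j : ℕ, coeff j (z ^ (α + 1) * (C (ν : ℚ) - C ((ν : ℚ) - 1) * z)⁻¹) =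
      ((α + ν * j).choose j : ℚ) :=
  coeff_gouldSeries heq α

/-- If z is the power series with constant term 1 satisfying s·z^ν = z − 1,
then the coefficient of s^j in z^{α+1}/(ν − (ν−1)z) equals C(α+νj, j). -/
theorem polya_szego_gould_second (ν : ℕ) (hν : 2 ≤ ν) (z : PowerSeries ℚ)
    (h0 : constantCoeff z = 1) (heq : X * z ^ ν = z - 1) (α : ℕ) :
    ∀ j : ℕ, coeff j (z ^ (α + 1) * (C (ν : ℚ) - C ((ν : ℚ) - 1) * z)⁻¹) =
      ((α + ν * j).choose j : ℚ) :=
  polya_szego_gould_second_general ν z heq α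
end

section
/- Let z be the formal power series with constant term 1 satisfying s·z^ν = z − 1 (ν ≥ 2). Then the formal derivative satisfies z′·(ν − (ν−1)z) = z^{ν+1}. -/
open PowerSeries

variable {R : Type*} [CommRing R]

theorem PowerSeries.mul_derivative_pow_s12 (z : R⟦X⟧) (n : ℕ) :
    z * d⁄dX R (z ^ n) = n * z ^ n * d⁄dX R z := by
  rcases n with _ | n
  · simp
  · rw [Derivation.leibniz_pow, Nat.add_sub_cancel, smul_eq_mul, nsmul_eq_mul]
    ring

/-- Differentiating `X z^n = z - 1` and multiplying by `z` gives
`n (z - 1) z' + z^(n+1) = z z'`, which rearranges to the claim. -/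
theorem PowerSeries.derivative_mul_eq_pow_succ_of_X_mul_pow_eq {z : R⟦X⟧} {n : ℕ}
    (h : X * z ^ n = z - 1) :
    d⁄dX R z * (C (n : R) - C ((n : R) - 1) * z) = z ^ (n + 1) := by
  have hd : z ^ n + X * d⁄dX R (z ^ n) = d⁄dX R z := by
    simpa [Derivation.leibniz, derivative_X, add_comm] using congrArg (d⁄dX R) h
  have hz : z * z ^ n + n * (z - 1) * d⁄dX R z = z * d⁄dX R z := by
    linear_combination z * hd - X * mul_derivative_pow_s12 z n - n * d⁄dX R z * h
  rw [map_sub, map_natCast, map_one]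
  linear_combination -hz

theorem gf_derivative_identity_general (ν : ℕ) (z : PowerSeries ℚ)
    (heq : X * z ^ ν = z - 1) :
    (derivative ℚ z) * (C (R := ℚ) (ν : ℚ) - C (R := ℚ) ((ν : ℚ) - 1) * z) = z ^ (ν + 1) :=
  derivative_mul_eq_pow_succ_of_X_mul_pow_eq heq

/-- If z is the power series with constant term 1 satisfying s·z^ν = z − 1,
then its formal derivative satisfies z′·(ν − (ν−1)z) = z^{ν+1}. -/
theorem gf_derivative_identity (ν : ℕ) (hν : 2 ≤ ν) (z : PowerSeries ℚ)
    (h0 : constantCoeff (R := ℚ) z = 1) (heq : X * z ^ ν = z - 1) :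
    (derivative ℚ z) * (C (R := ℚ) (ν : ℚ) - C (R := ℚ) ((ν : ℚ) - 1) * z) = z ^ (ν + 1) :=
  gf_derivative_identity_general ν z heq
end

section
/- For integers ν ≥ 2 and j ≥ 1, the j-th coefficient of the formal power series −(1/12)·log(ν − (ν−1)·z(s)) equals (1/(12j))·Σ_{k=1}^{j} (ν−1)^k · C(νj, j−k), where z is the generating function of the higher Catalan numbers. -/
/-!
Put u = ν − (ν−1)z − 1 = (1−ν)(z−1). As u has positive order, the terms k > j of
log(1+u) = Σ (−1)^{k+1} u^k/k do not reach the j-th coefficient, which is why the truncated sum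
appears, and everything reduces to [s^j](z−1)^k. Since z − 1 = s z^ν this is [s^{j−k}] z^{νk},
given by the Lagrange-type formula (νn+m)·[s^n] z^m = m·C(νn+m, n). That formula is proved by
strong induction on n: expanding z^m = (1 + s z^ν)^m turns it into the Vandermonde-type identity
(a+b)·Σ_{i+l=n} i·C(a,i)·C(b,l) = n·a·C(a+b, n).
-/

open PowerSeries Finset

namespace Nat

theorem sum_antidiagonal_succ_mul_choose_mul_choose (a b n : ℕ) :
    ∑ p ∈ antidiagonal (n + 1), p.1 * (a + 1).choose p.1 * b.choose p.2 =
      (a + 1) * (a + b).choose n := by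
  rw [Finset.Nat.sum_antidiagonal_succ, zero_mul, zero_mul, zero_add, add_choose_eq, mul_sum]
  refine sum_congr rfl fun p _ => ?_
  rw [← mul_assoc, add_one_mul_choose_eq]
  ring

theorem add_mul_sum_antidiagonal_mul_choose_mul_choose (a b n : ℕ) :
    (a + b) * ∑ p ∈ antidiagonal n, p.1 * a.choose p.1 * b.choose p.2 =
      n * a * (a + b).choose n := by
  rcases n with _ | n
  · simp
  rcases a with _ | a
  · simp only [mul_zero, zero_mul, mul_eq_zero]
    refine .inr (sum_eq_zero fun p _ => ?_)
    cases p.1 <;> simp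
  rw [sum_antidiagonal_succ_mul_choose_mul_choose, add_right_comm,
    show (n + 1) * (a + 1) * (a + b + 1).choose (n + 1) =
      (a + 1) * ((a + b + 1).choose (n + 1) * (n + 1)) by ring,
    ← add_one_mul_choose_eq]
  ring

end Nat

section CommRing

variable {R : Type*} [CommRing R] {ν : ℕ} {z : R⟦X⟧}

theorem constantCoeff_eq_one_of_X_mul_pow_eq_sub_one (hz : X * z ^ ν = z - 1) :
    constantCoeff z = 1 := by
  have h := congrArg constantCoeff hz
  simp only [map_mul, constantCoeff_X, zero_mul, map_sub, map_one] at h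
  linear_combination -h

theorem coeff_pow_eq_sum_antidiagonal (hz : X * z ^ ν = z - 1) (m n : ℕ) :
    coeff n (z ^ m) = ∑ p ∈ antidiagonal n, (m.choose p.1 : R) * coeff p.2 (z ^ (ν * p.1)) := by
  have hexp : z ^ m = ∑ i ∈ range (m + 1), (m.choose i : R) • (X ^ i * z ^ (ν * i)) := by
    conv_lhs => rw [← sub_add_cancel z 1, ← hz, add_pow]
    refine sum_congr rfl fun i _ ↦ ?_
    rw [one_pow, mul_one, mul_pow, ← pow_mul, Nat.cast_smul_eq_nsmul, nsmul_eq_mul, mul_comm]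
  set f : ℕ → R := fun i ↦ (m.choose i : R) * coeff n (X ^ i * z ^ (ν * i))
  have hfm : ∀ i ≥ m + 1, f i = 0 := fun i hi ↦ by simp [f, Nat.choose_eq_zero_of_lt hi]
  have hfn : ∀ i ≥ n + 1, f i = 0 := fun i hi ↦ by
    simp [f, coeff_X_pow_mul', show ¬ i ≤ n by omega]
  calc coeff n (z ^ m) = ∑ i ∈ range (m + 1), f i := by simp [hexp, f]
    _ = ∑ i ∈ range (n + 1), f i := by
      rw [← eventually_constant_sum hfm (Nat.le_add_right _ n),
        ← eventually_constant_sum hfn (by omega : n + 1 ≤ m + 1 + n)]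
    _ = _ := by
      rw [Finset.Nat.sum_antidiagonal_eq_sum_range_succ
        (fun i l ↦ (m.choose i : R) * coeff l (z ^ (ν * i)))]
      refine sum_congr rfl fun i hi ↦ ?_
      simp [f, coeff_X_pow_mul', Nat.lt_succ_iff.mp (mem_range.mp hi)]

end CommRing

section Field

variable {K : Type*} [Field K] [CharZero K] {ν : ℕ} {z : K⟦X⟧}

theorem natCast_mul_coeff_pow (hν : 0 < ν) (hz : X * z ^ ν = z - 1) (n m : ℕ) :
    ((ν * n + m : ℕ) : K) * coeff n (z ^ m) = m * (ν * n + m).choose n := by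
  induction n using Nat.strong_induction_on generalizing m with
  | _ n ih =>
  rcases n.eq_zero_or_pos with rfl | hn
  · simp [constantCoeff_eq_one_of_X_mul_pow_eq_sub_one hz]
  have hν' : (ν : K) ≠ 0 := by exact_mod_cast hν.ne'
  have hn' : (n : K) ≠ 0 := by exact_mod_cast hn.ne'
  have hterm : ∀ p ∈ antidiagonal n,
      (n : K) * coeff p.2 (z ^ (ν * p.1)) = p.1 * (ν * n).choose p.2 := by
    rintro ⟨i, l⟩ hp
    rw [HasAntidiagonal.mem_antidiagonal] at hp
    rcases i.eq_zero_or_pos with rfl | hi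
    · simp [coeff_one, show l ≠ 0 by omega]
    have := ih l (by omega) (ν * i)
    rw [← mul_add, add_comm l, hp] at this
    push_cast at this
    apply mul_left_cancel₀ hν'
    linear_combination this
  have hsum := congrArg (Nat.cast (R := K))
    (Nat.add_mul_sum_antidiagonal_mul_choose_mul_choose m (ν * n) n)
  push_cast at hsum
  apply mul_left_cancel₀ hn'
  calc (n : K) * (((ν * n + m : ℕ) : K) * coeff n (z ^ m))
      = (m + ν * n) *
          ∑ p ∈ antidiagonal n, (m.choose p.1 : K) * (n * coeff p.2 (z ^ (ν * p.1))) := by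
        rw [coeff_pow_eq_sum_antidiagonal hz, mul_sum, mul_sum, mul_sum]
        push_cast
        refine sum_congr rfl fun p _ ↦ ?_
        ring
    _ = (m + ν * n) * ∑ p ∈ antidiagonal n, (p.1 * m.choose p.1 * (ν * n).choose p.2 : K) := by
        congr 1
        refine sum_congr rfl fun p hp ↦ ?_
        rw [hterm p hp]
        ring
    _ = n * (m * (ν * n + m).choose n) := by
        rw [hsum, add_comm m]
        ring

theorem natCast_mul_coeff_sub_one_pow (hν : 0 < ν) (hz : X * z ^ ν = z - 1) {j k : ℕ}
    (hkj : k ≤ j) : (j : K) * coeff j ((z - 1) ^ k) = k * (ν * j).choose (j - k) := by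
  have h := natCast_mul_coeff_pow hν hz (j - k) (ν * k)
  rw [← mul_add, Nat.sub_add_cancel hkj] at h
  push_cast at h
  rw [← hz, mul_pow, ← pow_mul, coeff_X_pow_mul', if_pos hkj]
  apply mul_left_cancel₀ (show (ν : K) ≠ 0 by exact_mod_cast hν.ne')
  linear_combination h

end Field

theorem genus_one_coefficient_general (ν : ℕ) (hν : 2 ≤ ν) (z : PowerSeries ℚ)
    (heq : X * z ^ ν = z - 1) :
    ∀ j : ℕ, 1 ≤ j →
      coeff j (-(1 / 12 : ℚ) •
          ∑ k ∈ Finset.Icc 1 j, ((-1 : ℚ) ^ (k + 1) / k) •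
            ((C (ν : ℚ) - C ((ν : ℚ) - 1) * z) - 1) ^ k) =
        (1 / (12 * j) : ℚ) *
          ∑ k ∈ Finset.Icc 1 j, ((ν : ℚ) - 1) ^ k * ((ν * j).choose (j - k)) := by
  intro j hj
  have hu : C (ν : ℚ) - C ((ν : ℚ) - 1) * z - 1 = C (1 - (ν : ℚ)) * (z - 1) := by
    simp only [map_sub, map_one]
    ring
  rw [hu, map_smul, map_sum, smul_eq_mul, mul_sum, mul_sum]
  refine sum_congr rfl fun k hk ↦ ?_
  obtain ⟨hk, hkj⟩ := mem_Icc.mp hk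
  have hcoeff := natCast_mul_coeff_sub_one_pow (by omega) heq hkj
  have hsign : (-1 : ℚ) ^ (k + 1) * (1 - ν) ^ k = -(ν - 1) ^ k := by
    rw [show (1 - ν : ℚ) = -1 * (ν - 1) by ring, mul_pow, ← mul_assoc, ← pow_add,
      Odd.neg_one_pow ⟨k, by ring⟩, neg_one_mul]
  rw [map_smul, smul_eq_mul, mul_pow, ← map_pow, coeff_C_mul]
  have hk' : (k : ℚ) ≠ 0 := by positivity
  have hj' : (j : ℚ) ≠ 0 := by positivity
  rw [eq_div_of_mul_eq hj' ((mul_comm _ _).trans hcoeff)]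
  field_simp
  linear_combination -((ν * j).choose (j - k) : ℚ) * hsign

/-- The j-th coefficient of −(1/12)·log(ν − (ν−1)z(s)) equals
(1/(12j))·Σ_{k=1}^{j} (ν−1)^k C(νj, j−k), where z generates the higher Catalan
numbers.  Since ν − (ν−1)z = 1 + u with u of positive order, the j-th
coefficient of log(1+u) = Σ_{k≥1} (−1)^{k+1} u^k/k equals the j-th coefficient
of the truncation Σ_{k=1}^{j} (−1)^{k+1} u^k/k. -/
theorem genus_one_coefficient (ν : ℕ) (hν : 2 ≤ ν) (z : PowerSeries ℚ)
    (h0 : constantCoeff z = 1) (heq : X * z ^ ν = z - 1) :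
    ∀ j : ℕ, 1 ≤ j →
      coeff j (-(1 / 12 : ℚ) •
          ∑ k ∈ Finset.Icc 1 j, ((-1 : ℚ) ^ (k + 1) / k) •
            ((C (ν : ℚ) - C ((ν : ℚ) - 1) * z) - 1) ^ k) =
        (1 / (12 * j) : ℚ) *
          ∑ k ∈ Finset.Icc 1 j, ((ν : ℚ) - 1) ^ k * ((ν * j).choose (j - k)) :=
  genus_one_coefficient_general ν hν z heq
end

section
/- For integers ν ≥ 2 and j ≥ 1, the number of sequences of νj steps, each step being +1 or −(ν−1), whose partial sums are all ≥ 0 and whose total sum is 0, equals (1/j)·C(νj, j−1). -/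
/-!
Prepending a step `+1` to a nonnegative walk of length `νj` gives a sequence of length `νj + 1`
and sum `1` all of whose nonempty partial sums are positive, and every such sequence arises this
way. By the cycle lemma, every integer sequence with sum `1` has exactly one cyclic rotation with
this property: the rotation starting just after the last minimum of its partial sums. The
`νj + 1` rotations of a positive sequence are therefore pairwise distinct, and the sequences of
`νj + 1` steps with sum `1`, which are those with exactly `j` steps `-(ν - 1)`, are
`(νj + 1)` times as many as the nonnegative walks. Hence the count is
`C(νj + 1, j) / (νj + 1) = C(νj, j - 1) / j`.
-/

namespace NonnegWalk

section TwoValued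

open Finset

variable {α : Type*} [DecidableEq α]

theorem count_ofFn {m : ℕ} (f : Fin m → α) (b : α) :
    (List.ofFn f).count b = #{i | f i = b} := by
  induction m with
  | zero => simp
  | succ m ih =>
    rw [List.ofFn_succ, List.count_cons, ih, card_filter, card_filter, Fin.sum_univ_succ]
    simp [add_comm]

theorem ncard_twoValued_lists {a b : α} (hab : a ≠ b) (m k : ℕ) :
    {l : List α | l.length = m ∧ (∀ x ∈ l, x = a ∨ x = b) ∧ l.count b = k}.ncard =
      m.choose k := by
  set toList : Finset (Fin m) → List α :=
    fun s => List.ofFn fun i => if i ∈ s then b else a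
  have hcount (s : Finset (Fin m)) : (toList s).count b = #s := by
    simp only [toList, count_ofFn, ite_eq_left_iff, hab, imp_false, not_not,
      filter_mem_eq_inter, univ_inter]
  have hinj : Set.InjOn toList ↑(powersetCard k (univ : Finset (Fin m))) := by
    intro s _ t _ hst
    ext i
    have := congrFun (List.ofFn_injective hst) i
    split_ifs at this <;> simp_all
  have himage : toList '' ↑(powersetCard k (univ : Finset (Fin m))) =
      {l : List α | l.length = m ∧ (∀ x ∈ l, x = a ∨ x = b) ∧ l.count b = k} := by
    ext l
    constructor
    · rintro ⟨s, hs, rfl⟩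
      refine ⟨List.length_ofFn, ?_, by rw [hcount, (mem_powersetCard_univ.1 hs)]⟩
      simp only [toList, List.mem_ofFn, forall_exists_index]
      rintro x i rfl
      split_ifs <;> simp
    · rintro ⟨rfl, hab', rfl⟩
      have hl : l = toList {i | l[i] = b} := by
        refine List.ext_getElem List.length_ofFn.symm fun i _ _ => ?_
        simp only [toList, List.getElem_ofFn, mem_filter, mem_univ, true_and]
        split_ifs with h
        · exact h
        · exact (hab' _ (List.getElem_mem _)).resolve_right h
      exact ⟨_, mem_powersetCard_univ.2 (by rw [← hcount, ← hl]), hl.symm⟩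
  rw [← himage, hinj.ncard_image, Set.ncard_coe_finset, card_powersetCard, card_univ,
    Fintype.card_fin]

end TwoValued

theorem sum_eq_of_twoValued {a b : ℤ} {l : List ℤ} (h : ∀ x ∈ l, x = a ∨ x = b) :
    l.sum = l.length * a + l.count b * (b - a) := by
  induction l with
  | nil => simp
  | cons x l ih =>
    rw [List.forall_mem_cons] at h
    rw [List.sum_cons, ih h.2, List.length_cons, List.count_cons]
    rcases h.1 with rfl | rfl <;> split_ifs <;> simp_all <;> ring

def partialSum (l : List ℤ) (i : ℕ) : ℤ := (l.take i).sum

def PartialSumsPos (l : List ℤ) : Prop := ∀ i, 0 < i → i ≤ l.length → 0 < partialSum l i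

section Rotation

variable {l : List ℤ} {k : ℕ}

theorem partialSum_add (l : List ℤ) (a b : ℕ) :
    partialSum l (a + b) = partialSum l a + ((l.drop a).take b).sum := by
  simp [partialSum, List.take_add]

theorem partialSum_rotate_of_le (hk : k ≤ l.length) {i : ℕ} (hi : i ≤ l.length - k) :
    partialSum (l.rotate k) i = partialSum l (k + i) - partialSum l k := by
  rw [partialSum_add, partialSum, List.rotate_eq_drop_append_take hk,
    List.take_append_of_le_length (by simpa using hi)]
  ring

theorem partialSum_rotate_length_sub_add (hk : k ≤ l.length) {i : ℕ} (hi : i ≤ k) :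
    partialSum (l.rotate k) (l.length - k + i) = l.sum - partialSum l k + partialSum l i := by
  have hdrop : (l.drop k).length = l.length - k := List.length_drop
  rw [partialSum, List.rotate_eq_drop_append_take hk, ← hdrop, List.take_length_add_append,
    List.sum_append, List.take_take, min_eq_left hi, ← List.sum_take_add_sum_drop l k]
  simp only [partialSum]
  ring

theorem partialSumsPos_rotate_iff (hsum : l.sum = 1) (hk : k < l.length) :
    PartialSumsPos (l.rotate k) ↔
      (∀ t ≤ k, partialSum l k ≤ partialSum l t) ∧
        ∀ t, k < t → t ≤ l.length → partialSum l k < partialSum l t := by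
  constructor
  · intro hpos
    refine ⟨fun t ht => ?_, fun t hkt ht => ?_⟩
    · have := hpos (l.length - k + t) (by omega) (by rw [List.length_rotate]; omega)
      rw [partialSum_rotate_length_sub_add hk.le ht, hsum] at this
      omega
    · have := hpos (t - k) (by omega) (by rw [List.length_rotate]; omega)
      rw [partialSum_rotate_of_le hk.le (by omega), Nat.add_sub_cancel' hkt.le] at this
      omega
  · rintro ⟨hbefore, hafter⟩ i hi0 hi
    rw [List.length_rotate] at hi
    rcases le_or_gt i (l.length - k) with hlow | hhigh
    · rw [partialSum_rotate_of_le hk.le hlow]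
      linarith [hafter (k + i) (by omega) (by omega)]
    · obtain ⟨t, rfl⟩ : ∃ t, i = l.length - k + t := ⟨i - (l.length - k), by omega⟩
      rw [partialSum_rotate_length_sub_add hk.le (by omega), hsum]
      linarith [hbefore t (by omega)]

theorem exists_partialSumsPos_rotate (hsum : l.sum = 1) :
    ∃ k < l.length, PartialSumsPos (l.rotate k) := by
  obtain ⟨t₀, ht₀, hmin⟩ :=
    Finset.exists_min_image (Finset.range (l.length + 1)) (partialSum l) ⟨0, by simp⟩
  rw [Finset.mem_range] at ht₀
  simp only [Finset.mem_range, Nat.lt_succ_iff] at hmin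
  -- the last index at which the partial sums attain their minimum
  set k := Nat.findGreatest (fun t => partialSum l t = partialSum l t₀) l.length
  have hk_min : partialSum l k = partialSum l t₀ :=
    Nat.findGreatest_spec (P := fun t => partialSum l t = partialSum l t₀) (m := t₀) (by omega) rfl
  have hk_le : k ≤ l.length := Nat.findGreatest_le _
  have hlength : partialSum l l.length = 1 := by
    rw [partialSum, List.take_length, hsum]
  have hk_lt : k < l.length := by
    refine lt_of_le_of_ne hk_le fun h => ?_
    have := hmin 0 (Nat.zero_le _)
    rw [← hk_min, h, hlength] at this
    simp [partialSum] at this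
  refine ⟨k, hk_lt,
    (partialSumsPos_rotate_iff hsum hk_lt).2 ⟨fun t ht => ?_, fun t hkt ht => ?_⟩⟩
  · rw [hk_min]; exact hmin t (by omega)
  · rw [hk_min]
    exact lt_of_le_of_ne (hmin t ht) (Ne.symm (Nat.findGreatest_is_greatest hkt ht))

theorem eq_of_partialSumsPos_rotate (hsum : l.sum = 1) {k₁ k₂ : ℕ}
    (hk₁ : k₁ < l.length) (hk₂ : k₂ < l.length)
    (h₁ : PartialSumsPos (l.rotate k₁)) (h₂ : PartialSumsPos (l.rotate k₂)) : k₁ = k₂ := by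
  rw [partialSumsPos_rotate_iff hsum hk₁] at h₁
  rw [partialSumsPos_rotate_iff hsum hk₂] at h₂
  rcases lt_trichotomy k₁ k₂ with h | h | h
  · linarith [h₁.2 k₂ h hk₂.le, h₂.1 k₁ h.le]
  · exact h
  · linarith [h₂.2 k₁ h hk₁.le, h₁.1 k₂ h.le]

end Rotation

theorem rotate_rotate_of_add_eq_length {α : Type*} {l : List α} {a b : ℕ}
    (h : a + b = l.length) : (l.rotate a).rotate b = l := by
  rw [List.rotate_rotate, h, List.rotate_length]

theorem ncard_eq_ncard_partialSumsPos_mul {T : Set (List ℤ)} {m : ℕ}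
    (hlen : ∀ l ∈ T, l.length = m) (hsum : ∀ l ∈ T, l.sum = 1)
    (hrot : ∀ l ∈ T, ∀ k, l.rotate k ∈ T) :
    T.ncard = {l ∈ T | PartialSumsPos l}.ncard * m := by
  set f : List ℤ × ℕ → List ℤ := fun x => x.1.rotate (m - x.2)
  have hunrotate {p : List ℤ} {k : ℕ} (hp : p ∈ T) (hk : k < m) :
      (f (p, k)).rotate k = p :=
    rotate_rotate_of_add_eq_length (by rw [hlen p hp]; omega)
  have hinj : Set.InjOn f ({l ∈ T | PartialSumsPos l} ×ˢ Set.Iio m) := by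
    rintro ⟨p₁, k₁⟩ ⟨⟨hp₁, hpos₁⟩, hk₁⟩ ⟨p₂, k₂⟩ ⟨⟨hp₂, hpos₂⟩, hk₂⟩ heq
    have hmem : f (p₁, k₁) ∈ T := hrot p₁ hp₁ _
    rw [← hunrotate hp₁ hk₁] at hpos₁
    rw [← hunrotate hp₂ hk₂, ← heq] at hpos₂
    have hk : k₁ = k₂ := eq_of_partialSumsPos_rotate (hsum _ hmem)
      (by rw [hlen _ hmem]; exact hk₁) (by rw [hlen _ hmem]; exact hk₂) hpos₁ hpos₂
    subst hk
    have hp := congrArg (List.rotate · k₁) heq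
    simp only [hunrotate hp₁ hk₁, hunrotate hp₂ hk₂] at hp
    exact Prod.ext hp rfl
  have himage : f '' ({l ∈ T | PartialSumsPos l} ×ˢ Set.Iio m) = T := by
    refine Set.Subset.antisymm (Set.image_subset_iff.2 fun x hx => hrot _ hx.1.1 _)
      fun l hl => ?_
    obtain ⟨k, hk, hpos⟩ := exists_partialSumsPos_rotate (hsum l hl)
    rw [hlen l hl] at hk
    refine ⟨(l.rotate k, k), ⟨⟨hrot l hl k, hpos⟩, hk⟩, ?_⟩
    exact rotate_rotate_of_add_eq_length (by rw [hlen l hl]; omega)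
  nth_rw 1 [← himage]
  rw [hinj.ncard_image, Set.ncard_prod, Set.ncard_Iio_nat]

section Walks

variable {ν : ℕ}

def stepLists (ν n : ℕ) (s : ℤ) : Set (List ℤ) :=
  {l | l.length = n ∧ (∀ x ∈ l, x = 1 ∨ x = -((ν : ℤ) - 1)) ∧ l.sum = s}

def nonnegWalks (ν n : ℕ) : Set (List ℤ) :=
  {l | l.length = n ∧ (∀ x ∈ l, x = 1 ∨ x = -((ν : ℤ) - 1)) ∧
    (∀ p : List ℤ, p <+: l → 0 ≤ p.sum) ∧ l.sum = 0}

theorem partialSumsPos_cons_one_iff (w : List ℤ) :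
    PartialSumsPos (1 :: w) ↔ ∀ p : List ℤ, p <+: w → 0 ≤ p.sum := by
  have hcons (i : ℕ) : partialSum (1 :: w) (i + 1) = 1 + (w.take i).sum := by
    simp [partialSum]
  constructor
  · intro hpos p hp
    have := hpos (p.length + 1) (by omega) (by simpa using hp.length_le)
    rw [hcons, ← List.prefix_iff_eq_take.1 hp] at this
    omega
  · intro hnonneg i hi0 hi
    obtain ⟨i, rfl⟩ : ∃ i', i = i' + 1 := ⟨i - 1, by omega⟩
    rw [hcons]
    linarith [hnonneg _ (List.take_prefix i w)]

theorem cons_one_image_nonnegWalks (hν : 0 < ν) (n : ℕ) :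
    List.cons 1 '' nonnegWalks ν n = {l ∈ stepLists ν (n + 1) 1 | PartialSumsPos l} := by
  ext l
  constructor
  · rintro ⟨w, ⟨hlen, hsteps, hnonneg, hsum⟩, rfl⟩
    refine ⟨⟨by simp [hlen], ?_, by simp [hsum]⟩, (partialSumsPos_cons_one_iff w).2 hnonneg⟩
    exact List.forall_mem_cons.2 ⟨Or.inl rfl, hsteps⟩
  · rintro ⟨⟨hlen, hsteps, hsum⟩, hpos⟩
    obtain ⟨x, w, rfl⟩ := List.exists_cons_of_length_eq_add_one hlen
    have hx : x = 1 := by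
      have := hpos 1 one_pos (by simp)
      simp only [partialSum, List.take_succ_cons, List.take_zero, List.sum_singleton] at this
      have : (1 : ℤ) ≤ ν := by exact_mod_cast hν
      rcases hsteps x List.mem_cons_self with h | h <;> [exact h; omega]
    subst hx
    refine ⟨w, ⟨by simpa using hlen, fun y hy => hsteps y (List.mem_cons_of_mem _ hy),
      (partialSumsPos_cons_one_iff w).1 hpos, by simpa using hsum⟩, rfl⟩

theorem rotate_mem_stepLists {n : ℕ} {s : ℤ} {l : List ℤ} (hl : l ∈ stepLists ν n s)
    (k : ℕ) : l.rotate k ∈ stepLists ν n s :=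
  ⟨by simp [hl.1], fun x hx => hl.2.1 x (List.mem_rotate.1 hx),
    by rw [(List.rotate_perm l k).sum_eq, hl.2.2]⟩

theorem ncard_stepLists (hν : 0 < ν) (n j : ℕ) :
    (stepLists ν n (n - ν * j)).ncard = n.choose j := by
  rw [← ncard_twoValued_lists (show (1 : ℤ) ≠ -((ν : ℤ) - 1) by omega) n j]
  congr 1
  ext l
  refine and_congr_right fun hlen => and_congr_right fun hsteps => ?_
  rw [sum_eq_of_twoValued hsteps, hlen]
  constructor
  · intro h
    have : (ν : ℤ) * (l.count (-((ν : ℤ) - 1)) : ℕ) = ν * j := by linarith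
    exact_mod_cast mul_left_cancel₀ (by positivity) this
  · rintro rfl
    ring

theorem ncard_nonnegWalks_mul (hν : 0 < ν) (j : ℕ) :
    (nonnegWalks ν (ν * j)).ncard * (ν * j + 1) = (ν * j + 1).choose j := by
  have hsum : ((ν * j + 1 : ℕ) : ℤ) - ν * j = 1 := by push_cast; ring
  calc (nonnegWalks ν (ν * j)).ncard * (ν * j + 1)
      = {l ∈ stepLists ν (ν * j + 1) 1 | PartialSumsPos l}.ncard * (ν * j + 1) := by
        rw [← cons_one_image_nonnegWalks hν, Set.ncard_image_of_injective _ List.cons_injective]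
    _ = (stepLists ν (ν * j + 1) 1).ncard :=
        (ncard_eq_ncard_partialSumsPos_mul (fun _ hl => hl.1) (fun _ hl => hl.2.2)
          fun _ hl k => rotate_mem_stepLists hl k).symm
    _ = (ν * j + 1).choose j := by rw [← ncard_stepLists hν, hsum]

end Walks

end NonnegWalk

open NonnegWalk in
/-- The number of sequences of νj steps, each +1 or −(ν−1), with all partial
sums ≥ 0 and total sum 0, equals (1/j)·C(νj, j−1). -/
theorem nonneg_walk_count (ν j : ℕ) (hν : 2 ≤ ν) (hj : 1 ≤ j) :
    ({l : List ℤ |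
        l.length = ν * j ∧
        (∀ x ∈ l, x = 1 ∨ x = -((ν : ℤ) - 1)) ∧
        (∀ p : List ℤ, p <+: l → 0 ≤ p.sum) ∧
        l.sum = 0}.ncard : ℚ) =
      (1 / j : ℚ) * ((ν * j).choose (j - 1)) := by
  change ((nonnegWalks ν (ν * j)).ncard : ℚ) = _
  have hcycle := ncard_nonnegWalks_mul (by omega : 0 < ν) j
  have hchoose := Nat.add_one_mul_choose_eq (ν * j) (j - 1)
  rw [Nat.sub_add_cancel hj] at hchoose
  have hmul : (nonnegWalks ν (ν * j)).ncard * j = (ν * j).choose (j - 1) := by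
    refine Nat.eq_of_mul_eq_mul_left (Nat.add_one_pos (ν * j)) ?_
    rw [hchoose, ← hcycle]
    ring
  rw [← hmul]
  push_cast
  field_simp
end
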